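/- Let (X,d,A) be a metric pair and p ∈ [1,∞]. Then the p-Wasserstein distance W_p on D(X,A) is translation invariant if and only if the p-strengthened metric d_p(x,y) = min(d(x,y), ‖(d(x,A),d(y,A))‖_p) is a p-metric, i.e., d_p(x,y) ≤ ‖(d_p(x,z), d_p(z,y))‖_p for all x,y,z ∈ X. -/

import Mathlib

open scoped ENNReal
open Finsupp

/-- The `ℓᵖ` norm of a finite multiset of values in `[0,∞]`, for `p ∈ [1,∞]`. -/
noncomputable def lpNorm (p : ℝ≥0∞) (s : Multiset ℝ≥0∞) : ℝ≥0∞ :=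
  if p = ∞ then s.sup else (s.map (fun x => x ^ p.toReal)).sum ^ (1 / p.toReal)

/-- The `ℓᵖ` norm of a pair of values in `[0,∞]`. -/
noncomputable def lpPair (p : ℝ≥0∞) (a b : ℝ≥0∞) : ℝ≥0∞ := lpNorm p {a, b}

/-- A formal sum is supported in `A`. -/
def SuppIn {X : Type*} (A : Set X) (α : X →₀ ℕ) : Prop := ↑α.support ⊆ A

/-- Equality modulo `D(A)`: `α = β (mod D(A))`. -/
def DRel {X : Type*} (A : Set X) (α β : X →₀ ℕ) : Prop :=
  ∃ a b : X →₀ ℕ, SuppIn A a ∧ SuppIn A b ∧ α + a = β + b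

/-- `σ ∈ D(X × X)` is a matching between `α` and `β` (mod `D(A)`). -/
noncomputable def IsMatching {X : Type*} (A : Set X) (σ : X × X →₀ ℕ) (α β : X →₀ ℕ) : Prop :=
  DRel A (Finsupp.mapDomain Prod.fst σ) α ∧ DRel A (Finsupp.mapDomain Prod.snd σ) β

/-- The `p`-cost of a matching `σ` with respect to `d`. -/
noncomputable def matchCost {X : Type*} (d : X → X → ℝ≥0∞) (p : ℝ≥0∞) (σ : X × X →₀ ℕ) : ℝ≥0∞ :=
  lpNorm p (σ.toMultiset.map (fun z => d z.1 z.2))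

/-- The `p`-Wasserstein distance between persistence diagrams on `(X, d, A)`,
computed on representatives in the free commutative monoid `D(X) = (X →₀ ℕ)`. -/
noncomputable def Wp {X : Type*} (d : X → X → ℝ≥0∞) (A : Set X) (p : ℝ≥0∞)
    (α β : X →₀ ℕ) : ℝ≥0∞ :=
  ⨅ σ : {σ : X × X →₀ ℕ // IsMatching A σ α β}, matchCost d p σ.1

/-- Distance from a point to the subset `A` (infimum of distances, `∞` if `A = ∅`). -/
noncomputable def distToSet {X : Type*} (d : X → X → ℝ≥0∞) (A : Set X) (x : X) : ℝ≥0∞ :=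
  ⨅ a ∈ A, d x a

/-- The `p`-strengthening of `d` with respect to `A`. -/
noncomputable def pStrengthening {X : Type*} (d : X → X → ℝ≥0∞) (A : Set X) (p : ℝ≥0∞)
    (x x' : X) : ℝ≥0∞ :=
  min (d x x') (lpPair p (distToSet d A x) (distToSet d A x'))

/-!
A matching of `α` with `β` plus one of `α'` with `β'` is a matching of `α + α'` with `β + β'`,
and the `p`-cost of the sum is the `ℓᵖ` norm of the two costs; hence `W_p` is subadditive,
`W_p(α + γ, β + γ) ≤ W_p(α, β)` always holds (match `γ` with itself at cost `0`), and on single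
points `W_p(x, y) = d_p(x, y)`. If `W_p` is translation invariant, then
`d_p(x, y) = W_p(x + z, z + y) ≤ ‖(d_p(x, z), d_p(z, y))‖_p`.

Conversely, `W_p` is unchanged when `d` is replaced by `d_p`, and if `d_p` is a `p`-metric a
copy of `z ∉ A` can be removed from both diagrams without increasing the cost of a matching: a
pair `(z, z)` is dropped, and pairs `(v, z)`, `(z, w)` are spliced into `(v, w)`.
-/

section LpNorm

variable {p : ℝ≥0∞}

lemma lpPair_comm (a b : ℝ≥0∞) : lpPair p a b = lpPair p b a := by
  rw [lpPair, lpPair, Multiset.pair_comm]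

lemma lpNorm_top (s : Multiset ℝ≥0∞) : lpNorm ∞ s = s.sup := if_pos rfl

lemma lpNorm_of_ne_top (h : p ≠ ∞) (s : Multiset ℝ≥0∞) :
    lpNorm p s = (s.map (· ^ p.toReal)).sum ^ (1 / p.toReal) := if_neg h

lemma lpPair_top_eq_max (a b : ℝ≥0∞) : lpPair ∞ a b = max a b := by
  simp [lpPair, lpNorm_top]

lemma lpPair_of_ne_top (h : p ≠ ∞) (a b : ℝ≥0∞) :
    lpPair p a b = (a ^ p.toReal + b ^ p.toReal) ^ (1 / p.toReal) := by
  simp [lpPair, lpNorm_of_ne_top h]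

variable (hp : p ≠ 0)
include hp

lemma lpNorm_zero : lpNorm p 0 = 0 := by
  rcases eq_or_ne p ∞ with rfl | h
  · simp [lpNorm_top]
  · simp [lpNorm_of_ne_top h, ENNReal.toReal_pos hp h]

lemma lpNorm_singleton (a : ℝ≥0∞) : lpNorm p {a} = a := by
  rcases eq_or_ne p ∞ with rfl | h
  · simp [lpNorm_top]
  · rw [lpNorm_of_ne_top h, Multiset.map_singleton, Multiset.sum_singleton,
      one_div, ENNReal.rpow_rpow_inv (ENNReal.toReal_pos hp h).ne']

lemma lpNorm_add (s t : Multiset ℝ≥0∞) :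
    lpNorm p (s + t) = lpPair p (lpNorm p s) (lpNorm p t) := by
  rcases eq_or_ne p ∞ with rfl | h
  · simp [lpPair_top_eq_max, lpNorm_top]
  · have hr := (ENNReal.toReal_pos hp h).ne'
    rw [lpPair_of_ne_top h, lpNorm_of_ne_top h, lpNorm_of_ne_top h, lpNorm_of_ne_top h,
      one_div, ENNReal.rpow_inv_rpow hr, ENNReal.rpow_inv_rpow hr, Multiset.map_add,
      Multiset.sum_add]

lemma lpNorm_cons (a : ℝ≥0∞) (s : Multiset ℝ≥0∞) :
    lpNorm p (a ::ₘ s) = lpPair p a (lpNorm p s) := by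
  rw [← Multiset.singleton_add, lpNorm_add hp, lpNorm_singleton hp]

lemma lpPair_zero_right (a : ℝ≥0∞) : lpPair p a 0 = a := by
  rcases eq_or_ne p ∞ with rfl | h
  · simp [lpPair_top_eq_max]
  · have hr := ENNReal.toReal_pos hp h
    rw [lpPair_of_ne_top h, ENNReal.zero_rpow_of_pos hr, add_zero, one_div,
      ENNReal.rpow_rpow_inv hr.ne']

lemma lpPair_assoc (a b c : ℝ≥0∞) :
    lpPair p (lpPair p a b) c = lpPair p a (lpPair p b c) := by
  have h := lpNorm_add hp {a, b} {c}
  rw [lpNorm_singleton hp, Multiset.insert_eq_cons, Multiset.cons_add,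
    Multiset.singleton_add, lpNorm_cons hp] at h
  exact h.symm

omit hp in
lemma lpPair_mono {a a' b b' : ℝ≥0∞} (ha : a ≤ a') (hb : b ≤ b') :
    lpPair p a b ≤ lpPair p a' b' := by
  rcases eq_or_ne p ∞ with rfl | h
  · simpa only [lpPair_top_eq_max] using max_le_max ha hb
  · rw [lpPair_of_ne_top h, lpPair_of_ne_top h]
    gcongr

lemma le_lpPair_left (a b : ℝ≥0∞) : a ≤ lpPair p a b :=
  (lpPair_zero_right hp a).symm.trans_le (lpPair_mono le_rfl zero_le)

lemma lpNorm_mono {s t : Multiset ℝ≥0∞} (h : s ≤ t) : lpNorm p s ≤ lpNorm p t := by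
  obtain ⟨u, rfl⟩ := Multiset.le_iff_exists_add.mp h
  rw [lpNorm_add hp]
  exact le_lpPair_left hp _ _

lemma le_lpNorm_of_mem {a : ℝ≥0∞} {s : Multiset ℝ≥0∞} (h : a ∈ s) : a ≤ lpNorm p s :=
  (lpNorm_singleton hp a).symm.trans_le (lpNorm_mono hp (Multiset.singleton_le.mpr h))

lemma lpNorm_map_mono {Y : Type*} {f g : Y → ℝ≥0∞} (h : ∀ y, f y ≤ g y) (m : Multiset Y) :
    lpNorm p (m.map f) ≤ lpNorm p (m.map g) := by
  induction m using Multiset.induction with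
  | empty => simp
  | cons a s ih =>
    simp only [Multiset.map_cons, lpNorm_cons hp]
    exact lpPair_mono (h a) ih

lemma lpPair_iInf_left {ι : Sort*} (f : ι → ℝ≥0∞) (c : ℝ≥0∞) :
    lpPair p (⨅ i, f i) c = ⨅ i, lpPair p (f i) c := by
  rcases eq_or_ne p ∞ with rfl | h
  · simpa only [lpPair_top_eq_max] using iInf_sup_eq f c
  · have hr := ENNReal.toReal_pos hp h
    simp only [lpPair_of_ne_top h]
    have hf : (⨅ i, f i) ^ p.toReal = ⨅ i, f i ^ p.toReal :=
      (ENNReal.orderIsoRpow _ hr).map_iInf f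
    rw [hf, ENNReal.iInf_add]
    exact (ENNReal.orderIsoRpow _ (by positivity)).map_iInf _

lemma lpPair_iInf_right {ι : Sort*} (c : ℝ≥0∞) (f : ι → ℝ≥0∞) :
    lpPair p c (⨅ i, f i) = ⨅ i, lpPair p c (f i) := by
  simp only [lpPair_comm c, lpPair_iInf_left hp]

end LpNorm

lemma Finsupp.induction_single_one {Y : Type*} {P : (Y →₀ ℕ) → Prop} (zero : P 0)
    (add : ∀ y f, P f → P (f + single y 1)) (f : Y →₀ ℕ) : P f := by
  classical
  rw [← Finsupp.toMultiset_toFinsupp f]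
  induction f.toMultiset using Multiset.induction with
  | empty => simpa using zero
  | cons y s ih =>
    rw [← Multiset.singleton_add, add_comm, Multiset.toFinsupp_add,
      Multiset.toFinsupp_singleton]
    exact add y _ ih

lemma Finsupp.exists_eq_add_single_one {Y : Type*} {σ : Y →₀ ℕ} {q : Y}
    (h : q ∈ σ.toMultiset) : ∃ τ, σ = τ + single q 1 := by
  classical
  refine ⟨σ - single q 1, (tsub_add_cancel_of_le ?_).symm⟩
  rw [Finsupp.single_le_iff, Nat.one_le_iff_ne_zero, ← Finsupp.count_toMultiset]
  exact Multiset.count_ne_zero.2 h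

section Matching

variable {X : Type*} {A : Set X}

lemma drel_iff {α β : X →₀ ℕ} : DRel A α β ↔ ∀ x ∉ A, α x = β x := by
  classical
  constructor
  · rintro ⟨a, b, ha, hb, hab⟩ x hx
    have ha0 : a x = 0 := Finsupp.notMem_support_iff.mp fun h => hx (ha h)
    have hb0 : b x = 0 := Finsupp.notMem_support_iff.mp fun h => hx (hb h)
    simpa [ha0, hb0] using DFunLike.congr_fun hab x
  · intro h
    refine ⟨β.filter (· ∈ A), α.filter (· ∈ A), ?_, ?_, ?_⟩
    · simp [SuppIn, Finsupp.support_filter, Set.subset_def]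
    · simp [SuppIn, Finsupp.support_filter, Set.subset_def]
    · ext x
      by_cases hx : x ∈ A
      · simp [hx, add_comm]
      · simp [hx, h x hx]

lemma DRel.refl (α : X →₀ ℕ) : DRel A α α :=
  drel_iff.2 fun _ _ => rfl

lemma DRel.symm {α β : X →₀ ℕ} (h : DRel A α β) : DRel A β α :=
  drel_iff.2 fun x hx => (drel_iff.1 h x hx).symm

lemma DRel.trans {α β γ : X →₀ ℕ} (h₁ : DRel A α β) (h₂ : DRel A β γ) : DRel A α γ :=
  drel_iff.2 fun x hx => (drel_iff.1 h₁ x hx).trans (drel_iff.1 h₂ x hx)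

lemma DRel.add {α α' β β' : X →₀ ℕ} (h₁ : DRel A α α') (h₂ : DRel A β β') :
    DRel A (α + β) (α' + β') :=
  drel_iff.2 fun x hx => by simp [drel_iff.1 h₁ x hx, drel_iff.1 h₂ x hx]

lemma DRel.of_add_right {α β γ : X →₀ ℕ} (h : DRel A (α + γ) (β + γ)) : DRel A α β :=
  drel_iff.2 fun x hx => by simpa using drel_iff.1 h x hx

lemma drel_add_single {α : X →₀ ℕ} {a : X} (ha : a ∈ A) : DRel A (α + single a 1) α :=
  drel_iff.2 fun x hx => by simp [show a ≠ x by rintro rfl; exact hx ha]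

lemma drel_single_zero {a : X} (ha : a ∈ A) : DRel A (single a 1) 0 := by
  simpa using drel_add_single (α := 0) ha

lemma DRel.exists_mem_toMultiset_iff {Y : Type*} {g : Y → X} {σ : Y →₀ ℕ} {α : X →₀ ℕ}
    (h : DRel A (σ.mapDomain g) α) {x : X} (hx : x ∉ A) :
    (∃ q ∈ σ.toMultiset, g q = x) ↔ α x ≠ 0 := by
  classical
  rw [← drel_iff.1 h x hx, ← Finsupp.count_toMultiset, ← Finsupp.toMultiset_map,
    Multiset.count_ne_zero, Multiset.mem_map]

lemma IsMatching.congr {σ : X × X →₀ ℕ} {α α' β β' : X →₀ ℕ} (hσ : IsMatching A σ α β)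
    (h₁ : DRel A α α') (h₂ : DRel A β β') : IsMatching A σ α' β' :=
  ⟨hσ.1.trans h₁, hσ.2.trans h₂⟩

lemma IsMatching.add {σ τ : X × X →₀ ℕ} {α α' β β' : X →₀ ℕ}
    (hσ : IsMatching A σ α β) (hτ : IsMatching A τ α' β') :
    IsMatching A (σ + τ) (α + α') (β + β') := by
  constructor <;> rw [Finsupp.mapDomain_add]
  exacts [hσ.1.add hτ.1, hσ.2.add hτ.2]

lemma isMatching_zero : IsMatching A (0 : X × X →₀ ℕ) 0 0 := by
  constructor <;> simp [drel_iff]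

lemma isMatching_single (x y : X) :
    IsMatching A (single (x, y) 1) (single x 1) (single y 1) := by
  constructor <;> simp [drel_iff]

lemma IsMatching.of_add_single {σ τ : X × X →₀ ℕ} {α β : X →₀ ℕ} {z : X}
    (hσ : IsMatching A σ (α + single z 1) (β + single z 1))
    (hfst : σ.mapDomain Prod.fst = τ.mapDomain Prod.fst + single z 1)
    (hsnd : σ.mapDomain Prod.snd = τ.mapDomain Prod.snd + single z 1) :
    IsMatching A τ α β :=
  ⟨DRel.of_add_right (hfst ▸ hσ.1), DRel.of_add_right (hsnd ▸ hσ.2)⟩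

end Matching

section Wasserstein

variable {X : Type*} {d d' : X → X → ℝ≥0∞} {A : Set X} {p : ℝ≥0∞}

lemma matchCost_zero (hp : p ≠ 0) : matchCost d p 0 = 0 := by
  simp [matchCost, lpNorm_zero hp]

lemma matchCost_single (hp : p ≠ 0) (q : X × X) : matchCost d p (single q 1) = d q.1 q.2 := by
  simp [matchCost, lpNorm_singleton hp]

lemma matchCost_add (hp : p ≠ 0) (σ τ : X × X →₀ ℕ) :
    matchCost d p (σ + τ) = lpPair p (matchCost d p σ) (matchCost d p τ) := by
  rw [matchCost, Finsupp.toMultiset_add, Multiset.map_add, lpNorm_add hp, matchCost, matchCost]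

lemma matchCost_mono (hp : p ≠ 0) (h : ∀ x y, d x y ≤ d' x y) (σ : X × X →₀ ℕ) :
    matchCost d p σ ≤ matchCost d' p σ :=
  lpNorm_map_mono hp (fun q : X × X => h q.1 q.2) _

lemma Wp_le_matchCost {σ : X × X →₀ ℕ} {α β : X →₀ ℕ} (h : IsMatching A σ α β) :
    Wp d A p α β ≤ matchCost d p σ :=
  iInf_le (fun σ : {σ // IsMatching A σ α β} => matchCost d p σ.1) ⟨σ, h⟩

lemma Wp_congr {α α' β β' : X →₀ ℕ} (h₁ : DRel A α α') (h₂ : DRel A β β') :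
    Wp d A p α β = Wp d A p α' β' :=
  le_antisymm (le_iInf fun σ => Wp_le_matchCost (σ.2.congr h₁.symm h₂.symm))
    (le_iInf fun σ => Wp_le_matchCost (σ.2.congr h₁ h₂))

lemma Wp_mono (hp : p ≠ 0) (h : ∀ x y, d x y ≤ d' x y) (α β : X →₀ ℕ) :
    Wp d A p α β ≤ Wp d' A p α β :=
  iInf_mono fun σ => matchCost_mono hp h σ.1

lemma Wp_add_le (hp : p ≠ 0) (α α' β β' : X →₀ ℕ) :
    Wp d A p (α + α') (β + β') ≤ lpPair p (Wp d A p α β) (Wp d A p α' β') := by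
  simp only [Wp, lpPair_iInf_left hp, lpPair_iInf_right hp]
  refine le_iInf₂ fun σ τ => ?_
  rw [← matchCost_add hp]
  exact Wp_le_matchCost (σ.2.add τ.2)

lemma Wp_zero_zero (hp : p ≠ 0) : Wp d A p 0 0 = 0 :=
  le_antisymm ((Wp_le_matchCost isMatching_zero).trans_eq (matchCost_zero hp)) zero_le

lemma Wp_single_single_le (hp : p ≠ 0) (x y : X) :
    Wp d A p (single x 1) (single y 1) ≤ d x y :=
  (Wp_le_matchCost (isMatching_single x y)).trans_eq (matchCost_single hp _)

lemma Wp_self (hp : p ≠ 0) (hrefl : ∀ x, d x x = 0) (α : X →₀ ℕ) : Wp d A p α α = 0 := by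
  refine le_antisymm ?_ zero_le
  induction α using Finsupp.induction_single_one with
  | zero => exact (Wp_zero_zero hp).le
  | add x α ih =>
    calc Wp d A p (α + single x 1) (α + single x 1)
        ≤ lpPair p (Wp d A p α α) (Wp d A p (single x 1) (single x 1)) := Wp_add_le hp _ _ _ _
      _ ≤ lpPair p 0 (d x x) := lpPair_mono ih (Wp_single_single_le hp x x)
      _ = 0 := by rw [hrefl, lpPair_zero_right hp]

lemma Wp_mapDomain_le_matchCost (hp : p ≠ 0)
    (h : ∀ x y, Wp d A p (single x 1) (single y 1) ≤ d' x y) (σ : X × X →₀ ℕ) :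
    Wp d A p (σ.mapDomain Prod.fst) (σ.mapDomain Prod.snd) ≤ matchCost d' p σ := by
  induction σ using Finsupp.induction_single_one with
  | zero => simp [Wp_zero_zero hp]
  | add q σ ih =>
    simp only [Finsupp.mapDomain_add, Finsupp.mapDomain_single, matchCost_add hp,
      matchCost_single hp]
    exact (Wp_add_le hp _ _ _ _).trans (lpPair_mono ih (h q.1 q.2))

lemma Wp_le_Wp_of_single_le (hp : p ≠ 0)
    (h : ∀ x y, Wp d A p (single x 1) (single y 1) ≤ d' x y) (α β : X →₀ ℕ) :
    Wp d A p α β ≤ Wp d' A p α β :=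
  le_iInf fun σ => (Wp_congr σ.2.1.symm σ.2.2.symm).trans_le
    (Wp_mapDomain_le_matchCost hp h σ.1)

end Wasserstein

section Strengthening

variable {X : Type*} {d : X → X → ℝ≥0∞} {A : Set X} {p : ℝ≥0∞}

lemma distToSet_eq_zero (hrefl : ∀ x, d x x = 0) {a : X} (ha : a ∈ A) : distToSet d A a = 0 :=
  le_antisymm ((iInf₂_le a ha).trans_eq (hrefl a)) zero_le

lemma Wp_single_zero_le (hp : p ≠ 0) (x : X) : Wp d A p (single x 1) 0 ≤ distToSet d A x :=
  le_iInf₂ fun a ha => (Wp_congr (DRel.refl _) (drel_single_zero ha)).symm.trans_le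
    (Wp_single_single_le hp x a)

lemma Wp_zero_single_le (hp : p ≠ 0) (hsymm : ∀ x y, d x y = d y x) (y : X) :
    Wp d A p 0 (single y 1) ≤ distToSet d A y :=
  le_iInf₂ fun a ha => (Wp_congr (drel_single_zero ha) (DRel.refl _)).symm.trans_le
    ((Wp_single_single_le hp a y).trans_eq (hsymm a y))

lemma Wp_single_single_le_pStrengthening (hp : p ≠ 0) (hsymm : ∀ x y, d x y = d y x)
    (x y : X) : Wp d A p (single x 1) (single y 1) ≤ pStrengthening d A p x y := by
  refine le_min (Wp_single_single_le hp x y) ?_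
  calc Wp d A p (single x 1) (single y 1) = Wp d A p (single x 1 + 0) (0 + single y 1) := by
        rw [add_zero, zero_add]
    _ ≤ lpPair p (Wp d A p (single x 1) 0) (Wp d A p 0 (single y 1)) := Wp_add_le hp _ _ _ _
    _ ≤ _ := lpPair_mono (Wp_single_zero_le hp x) (Wp_zero_single_le hp hsymm y)

lemma IsMatching.distToSet_fst_le [DecidableEq X] (hp : p ≠ 0) (hrefl : ∀ x, d x x = 0)
    {x y : X} {σ : X × X →₀ ℕ} (hσ : IsMatching A σ (single x 1) (single y 1))
    (hxy : (x, y) ∉ σ.toMultiset) :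
    distToSet d A x ≤
      lpNorm p ((σ.toMultiset.filter fun q : X × X => q.1 = x).map fun q => d q.1 q.2) := by
  by_cases hxA : x ∈ A
  · exact (distToSet_eq_zero hrefl hxA).trans_le zero_le
  obtain ⟨q, hq, rfl⟩ := (hσ.1.exists_mem_toMultiset_iff hxA).2 (by simp)
  -- outside `A`, the second marginal of `σ` only charges `y`
  have hqA : q.2 ∈ A := by
    by_contra hA
    obtain ⟨hqy, -⟩ := Finsupp.single_apply_ne_zero.1
      ((hσ.2.exists_mem_toMultiset_iff hA).1 ⟨q, hq, rfl⟩)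
    exact hxy (hqy ▸ hq)
  exact (iInf₂_le q.2 hqA).trans
    (le_lpNorm_of_mem hp (Multiset.mem_map_of_mem _ (Multiset.mem_filter.2 ⟨hq, rfl⟩)))

lemma IsMatching.distToSet_snd_le [DecidableEq X] (hp : p ≠ 0) (hrefl : ∀ x, d x x = 0)
    (hsymm : ∀ x y, d x y = d y x) {x y : X} {σ : X × X →₀ ℕ}
    (hσ : IsMatching A σ (single x 1) (single y 1)) (hxy : (x, y) ∉ σ.toMultiset) :
    distToSet d A y ≤
      lpNorm p ((σ.toMultiset.filter fun q : X × X => q.2 = y).map fun q => d q.1 q.2) := by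
  by_cases hyA : y ∈ A
  · exact (distToSet_eq_zero hrefl hyA).trans_le zero_le
  obtain ⟨q, hq, rfl⟩ := (hσ.2.exists_mem_toMultiset_iff hyA).2 (by simp)
  have hqA : q.1 ∈ A := by
    by_contra hA
    obtain ⟨hqx, -⟩ := Finsupp.single_apply_ne_zero.1
      ((hσ.1.exists_mem_toMultiset_iff hA).1 ⟨q, hq, rfl⟩)
    exact hxy (hqx ▸ hq)
  exact ((iInf₂_le q.1 hqA).trans_eq (hsymm _ _)).trans
    (le_lpNorm_of_mem hp (Multiset.mem_map_of_mem _ (Multiset.mem_filter.2 ⟨hq, rfl⟩)))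

lemma pStrengthening_le_matchCost (hp : p ≠ 0) (hrefl : ∀ x, d x x = 0)
    (hsymm : ∀ x y, d x y = d y x) {x y : X} {σ : X × X →₀ ℕ}
    (hσ : IsMatching A σ (single x 1) (single y 1)) :
    pStrengthening d A p x y ≤ matchCost d p σ := by
  classical
  set s := σ.toMultiset
  by_cases hxy : (x, y) ∈ s
  · exact (min_le_left _ _).trans (le_lpNorm_of_mem hp (Multiset.mem_map_of_mem _ hxy))
  have hdisj : s.filter (·.1 = x) + s.filter (·.2 = y) ≤ s := by
    have hboth : s.filter (fun q => q.1 = x ∧ q.2 = y) = 0 :=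
      Multiset.filter_eq_nil.2 fun q hq h => hxy ((Prod.ext h.1 h.2 : q = (x, y)) ▸ hq)
    rw [Multiset.filter_add_filter, hboth, add_zero]
    exact Multiset.filter_le _ _
  calc pStrengthening d A p x y ≤ lpPair p (distToSet d A x) (distToSet d A y) := min_le_right _ _
    _ ≤ lpNorm p ((s.filter (·.1 = x) + s.filter (·.2 = y)).map fun q => d q.1 q.2) := by
      rw [Multiset.map_add, lpNorm_add hp]
      exact lpPair_mono (hσ.distToSet_fst_le hp hrefl hxy)
        (hσ.distToSet_snd_le hp hrefl hsymm hxy)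
    _ ≤ matchCost d p σ := lpNorm_mono hp (Multiset.map_le_map hdisj)

lemma Wp_single_single (hp : p ≠ 0) (hrefl : ∀ x, d x x = 0) (hsymm : ∀ x y, d x y = d y x)
    (x y : X) : Wp d A p (single x 1) (single y 1) = pStrengthening d A p x y :=
  le_antisymm (Wp_single_single_le_pStrengthening hp hsymm x y)
    (le_iInf fun σ => pStrengthening_le_matchCost hp hrefl hsymm σ.2)

lemma Wp_pStrengthening (hp : p ≠ 0) (hsymm : ∀ x y, d x y = d y x) (α β : X →₀ ℕ) :
    Wp (pStrengthening d A p) A p α β = Wp d A p α β :=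
  le_antisymm (Wp_mono hp (fun _ _ => min_le_left _ _) α β)
    (Wp_le_Wp_of_single_le hp (Wp_single_single_le_pStrengthening hp hsymm) α β)

end Strengthening

section Translation

variable {X : Type*} {d : X → X → ℝ≥0∞} {A : Set X} {p : ℝ≥0∞}

lemma IsMatching.exists_of_add_single (hp : p ≠ 0)
    (hd : ∀ x y z, d x y ≤ lpPair p (d x z) (d z y)) {σ : X × X →₀ ℕ} {α β : X →₀ ℕ}
    {z : X} (hσ : IsMatching A σ (α + single z 1) (β + single z 1)) :
    ∃ τ, IsMatching A τ α β ∧ matchCost d p τ ≤ matchCost d p σ := by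
  by_cases hz : z ∈ A
  · exact ⟨σ, hσ.congr (drel_add_single hz) (drel_add_single hz), le_rfl⟩
  obtain ⟨⟨z₁, w⟩, hw, hz₁ : z₁ = z⟩ := (hσ.1.exists_mem_toMultiset_iff hz).2 (by simp)
  obtain ⟨⟨v, z₂⟩, hv, hz₂ : z₂ = z⟩ := (hσ.2.exists_mem_toMultiset_iff hz).2 (by simp)
  subst z₁ z₂
  obtain ⟨τ, rfl⟩ := Finsupp.exists_eq_add_single_one hw
  by_cases hvw : (v, z) = (z, w)
  · obtain ⟨rfl, rfl⟩ := Prod.mk.inj hvw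
    refine ⟨τ, hσ.of_add_single ?_ ?_, ?_⟩
    · simp [Finsupp.mapDomain_add]
    · simp [Finsupp.mapDomain_add]
    · rw [matchCost_add hp]
      exact le_lpPair_left hp _ _
  have hv' : (v, z) ∈ τ.toMultiset := by
    simpa [Finsupp.toMultiset_add, hvw] using hv
  obtain ⟨τ, rfl⟩ := Finsupp.exists_eq_add_single_one hv'
  refine ⟨τ + single (v, w) 1, hσ.of_add_single ?_ ?_, ?_⟩
  · simp only [Finsupp.mapDomain_add, Finsupp.mapDomain_single]
  · simp only [Finsupp.mapDomain_add, Finsupp.mapDomain_single]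
    abel
  · simp only [matchCost_add hp, matchCost_single hp, lpPair_assoc hp]
    exact lpPair_mono le_rfl (hd v w z)

lemma Wp_le_Wp_add_single (hp : p ≠ 0) (hd : ∀ x y z, d x y ≤ lpPair p (d x z) (d z y))
    (α β : X →₀ ℕ) (z : X) : Wp d A p α β ≤ Wp d A p (α + single z 1) (β + single z 1) :=
  le_iInf fun σ =>
    let ⟨_, hτ, hcost⟩ := σ.2.exists_of_add_single hp hd
    (Wp_le_matchCost hτ).trans hcost

lemma Wp_le_Wp_add (hp : p ≠ 0) (hd : ∀ x y z, d x y ≤ lpPair p (d x z) (d z y))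
    (α β γ : X →₀ ℕ) : Wp d A p α β ≤ Wp d A p (α + γ) (β + γ) := by
  induction γ using Finsupp.induction_single_one with
  | zero => simp
  | add z γ ih =>
    simpa only [add_assoc] using ih.trans (Wp_le_Wp_add_single hp hd _ _ z)

end Translation

theorem wasserstein_translation_invariant_iff_p_metric_general {X : Type*}
    (d : X → X → ℝ≥0∞)
    (hrefl : ∀ x, d x x = 0)
    (hsymm : ∀ x y, d x y = d y x)
    (A : Set X) (p : ℝ≥0∞) (hp : 1 ≤ p) :
    (∀ α β γ : X →₀ ℕ, Wp d A p (α + γ) (β + γ) = Wp d A p α β) ↔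
    (∀ x y z : X, pStrengthening d A p x y ≤
      lpPair p (pStrengthening d A p x z) (pStrengthening d A p z y)) := by
  have hp₀ : p ≠ 0 := (zero_lt_one.trans_le hp).ne'
  have hsingle := Wp_single_single (A := A) hp₀ hrefl hsymm
  constructor
  · intro htrans x y z
    calc pStrengthening d A p x y
        = Wp d A p (single x 1 + single z 1) (single z 1 + single y 1) := by
          rw [add_comm (single z 1), htrans, hsingle]
      _ ≤ lpPair p (Wp d A p (single x 1) (single z 1)) (Wp d A p (single z 1) (single y 1)) :=
          Wp_add_le hp₀ _ _ _ _
      _ = _ := by rw [hsingle, hsingle]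
  · intro hmetric α β γ
    refine le_antisymm ?_ ?_
    · calc Wp d A p (α + γ) (β + γ) ≤ lpPair p (Wp d A p α β) (Wp d A p γ γ) :=
            Wp_add_le hp₀ _ _ _ _
        _ = Wp d A p α β := by rw [Wp_self hp₀ hrefl, lpPair_zero_right hp₀]
    · simpa only [Wp_pStrengthening hp₀ hsymm] using Wp_le_Wp_add (A := A) hp₀ hmetric α β γ

/-- `W_p` on `D(X,A)` is translation invariant iff the
`p`-strengthened metric `d_p` is a `p`-metric. -/
theorem wasserstein_translation_invariant_iff_p_metric {X : Type*}
    (d : X → X → ℝ≥0∞)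
    (hrefl : ∀ x, d x x = 0)
    (hsymm : ∀ x y, d x y = d y x)
    (htri : ∀ x y z, d x y ≤ d x z + d z y)
    (A : Set X) (p : ℝ≥0∞) (hp : 1 ≤ p) :
    (∀ α β γ : X →₀ ℕ, Wp d A p (α + γ) (β + γ) = Wp d A p α β) ↔
    (∀ x y z : X, pStrengthening d A p x y ≤
      lpPair p (pStrengthening d A p x z) (pStrengthening d A p z y)) :=
  wasserstein_translation_invariant_iff_p_metric_general d hrefl hsymm A p hp
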